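/- Let (H, L) be a quasi-abelian partial matched pair. Then for all h ∈ H and x ∈ L: Σ x₁(h₁⇀1_L)₁ ⊗ h₂⁰ ⊗ x₂(h₁⇀1_L)₂h₂¹ ⊗ h₃ = Σ x₁(h₁⁰⇀1_L) ⊗ h₂⁰ ⊗ x₂h₁¹h₂¹(h₃⇀1_L) ⊗ h₄ in L ⊗ H ⊗ L ⊗ H. -/

import Mathlib

open TensorProduct LinearMap

namespace PartialHopf

variable (k : Type*) [Field k]

section Action

variable (H A : Type*) [Ring H] [HopfAlgebra k H] [Ring A] [Algebra k A]

/-- `A` is a left partial `H`-module algebra via the bilinear action `act`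
(Definition 2.1 / Caenepeel-Janssen): `1 ⇀ a = a`,
`h ⇀ (ab) = Σ (h₁ ⇀ a)(h₂ ⇀ b)` and `h ⇀ (g ⇀ a) = Σ (h₁ ⇀ 1)(h₂g ⇀ a)`. -/
structure IsPartialAction (act : H →ₗ[k] A →ₗ[k] A) : Prop where
  one_act : ∀ a : A, act 1 a = a
  act_mul : ∀ (h : H) (a b : A), act h (a * b)
      = LinearMap.mul' k A
          ((TensorProduct.map (act.flip a) (act.flip b)) (Coalgebra.comul (R := k) h))
  act_act : ∀ (h g : H) (a : A), act h (act g a)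
      = LinearMap.mul' k A
          ((TensorProduct.map (act.flip 1) ((act.flip a) ∘ₗ (LinearMap.mulRight k g)))
            (Coalgebra.comul (R := k) h))

end Action

section Coaction

variable (H C : Type*) [Ring H] [HopfAlgebra k H]
  [AddCommGroup C] [Module k C] [Coalgebra k C]

/-- Auxiliary map sending `Σ c ⊗ d` to `Σ c⁰ ⊗ d⁰ ⊗ c¹d¹`. -/
noncomputable def coactPairMul (ρ : C →ₗ[k] C ⊗[k] H) :
    C ⊗[k] C →ₗ[k] (C ⊗[k] C) ⊗[k] H :=
  (LinearMap.lTensor (C ⊗[k] C) (LinearMap.mul' k H))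
    ∘ₗ (TensorProduct.tensorTensorTensorComm k C H C H).toLinearMap
    ∘ₗ (TensorProduct.map ρ ρ)

/-- Auxiliary map sending `c` to `Σ c₁⁰ ⊗ (c₁¹)₁ ⊗ (c₁¹)₂ ε_C(c₂⁰) c₂¹`. -/
noncomputable def coactRight (ρ : C →ₗ[k] C ⊗[k] H) : C →ₗ[k] (C ⊗[k] H) ⊗[k] H :=
  (TensorProduct.assoc k C H H).symm.toLinearMap
    ∘ₗ (LinearMap.lTensor C
        ((LinearMap.lTensor H (LinearMap.mul' k H)) ∘ₗ (TensorProduct.assoc k H H H).toLinearMap))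
    ∘ₗ (TensorProduct.assoc k C (H ⊗[k] H) H).toLinearMap
    ∘ₗ (TensorProduct.map ((LinearMap.lTensor C (Coalgebra.comul (R := k))) ∘ₗ ρ)
          ((TensorProduct.lid k H).toLinearMap
            ∘ₗ (LinearMap.rTensor H (Coalgebra.counit (R := k))) ∘ₗ ρ))
    ∘ₗ (Coalgebra.comul (R := k))

/-- `C` is a right partial `H`-comodule coalgebra via `ρ` (Definition 2.3 / Batista-Vercruysse):
`(id ⊗ ε_H)ρ(c) = c`, `(Δ_C ⊗ id)ρ(c) = Σ c₁⁰ ⊗ c₂⁰ ⊗ c₁¹c₂¹` and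
`(ρ ⊗ id)ρ(c) = Σ c₁⁰ ⊗ (c₁¹)₁ ⊗ (c₁¹)₂ ε_C(c₂⁰)c₂¹`. -/
structure IsPartialCoaction (ρ : C →ₗ[k] C ⊗[k] H) : Prop where
  tensor_counit : ∀ c : C,
    (TensorProduct.rid k C) ((LinearMap.lTensor C (Coalgebra.counit (R := k))) (ρ c)) = c
  comul_coact : ∀ c : C,
    (LinearMap.rTensor H (Coalgebra.comul (R := k))) (ρ c)
      = coactPairMul k H C ρ (Coalgebra.comul (R := k) c)
  coact_coact : ∀ c : C,
    (LinearMap.rTensor H ρ) (ρ c) = coactRight k H C ρ c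

end Coaction

end PartialHopf
namespace PartialHopf
variable (k : Type*) [Field k]

section MatchedPair

variable (H L : Type*) [Ring H] [HopfAlgebra k H] [Ring L] [HopfAlgebra k L]

/-- Generic swap `(m ⊗ n) ⊗ p ↦ (m ⊗ p) ⊗ n`. -/
noncomputable def swapR (M N P : Type*) [AddCommGroup M] [AddCommGroup N] [AddCommGroup P]
    [Module k M] [Module k N] [Module k P] :
    (M ⊗[k] N) ⊗[k] P →ₗ[k] (M ⊗[k] P) ⊗[k] N :=
  (TensorProduct.assoc k M P N).symm.toLinearMap
    ∘ₗ (LinearMap.lTensor M (TensorProduct.comm k N P).toLinearMap)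
    ∘ₗ (TensorProduct.assoc k M N P).toLinearMap

variable {H L}

/-- The bilinear action as a map on the tensor product. -/
noncomputable def actT (act : H →ₗ[k] L →ₗ[k] L) : H ⊗[k] L →ₗ[k] L :=
  TensorProduct.lift act

/-- Shuffle `(x₁ ⊗ x₂) ⊗ (a ⊗ y) ↦ a ⊗ (x₁ ⊗ x₂y)`. -/
noncomputable def psiMap : (L ⊗[k] L) ⊗[k] (H ⊗[k] L) →ₗ[k] H ⊗[k] (L ⊗[k] L) :=
  (TensorProduct.assoc k H L L).toLinearMap
    ∘ₗ (TensorProduct.map (TensorProduct.comm k L H).toLinearMap (LinearMap.mul' k L))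
    ∘ₗ (TensorProduct.tensorTensorTensorComm k L L H L).toLinearMap

/-- `h ↦ Σ (h₂g)⁰ ⊗ (h₁ ⇀ x)₁ ⊗ (h₁ ⇀ x)₂ (h₂g)¹`: the left hand side of the
compatibility condition (iii) of a partial matched pair. -/
noncomputable def mpLHS (act : H →ₗ[k] L →ₗ[k] L) (ρ : H →ₗ[k] H ⊗[k] L) (g : H) (x : L) :
    H →ₗ[k] H ⊗[k] (L ⊗[k] L) :=
  psiMap k ∘ₗ (TensorProduct.map ((Coalgebra.comul (R := k)) ∘ₗ act.flip x)
      (ρ ∘ₗ LinearMap.mulRight k g)) ∘ₗ (Coalgebra.comul (R := k))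

/-- `h ⊗ x ↦ (h⁰ ⇀ x) ⊗ h¹`. -/
noncomputable def phiB (act : H →ₗ[k] L →ₗ[k] L) (ρ : H →ₗ[k] H ⊗[k] L) :
    H ⊗[k] L →ₗ[k] L ⊗[k] L :=
  (LinearMap.rTensor L (actT k act)) ∘ₗ (swapR k H L L) ∘ₗ (LinearMap.rTensor L ρ)

/-- `(h₁ ⊗ h₂) ⊗ (x₁ ⊗ x₂) ↦ (h₁⁰ ⇀ x₁) ⊗ h₁¹(h₂ ⇀ x₂)`. -/
noncomputable def bAssemble (act : H →ₗ[k] L →ₗ[k] L) (ρ : H →ₗ[k] H ⊗[k] L) :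
    (H ⊗[k] H) ⊗[k] (L ⊗[k] L) →ₗ[k] L ⊗[k] L :=
  (LinearMap.lTensor L (LinearMap.mul' k L))
    ∘ₗ (TensorProduct.assoc k L L L).toLinearMap
    ∘ₗ (TensorProduct.map (phiB k act ρ) (actT k act))
    ∘ₗ (TensorProduct.tensorTensorTensorComm k H H L L).toLinearMap

/-- `h ↦ Σ (h₁⁰ ⇀ x₁) ⊗ h₁¹(h₂ ⇀ x₂)`. -/
noncomputable def betaMap (act : H →ₗ[k] L →ₗ[k] L) (ρ : H →ₗ[k] H ⊗[k] L) (x : L) :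
    H →ₗ[k] L ⊗[k] L :=
  (bAssemble k act ρ)
    ∘ₗ ((TensorProduct.mk k (H ⊗[k] H) (L ⊗[k] L)).flip (Coalgebra.comul (R := k) x))
    ∘ₗ (Coalgebra.comul (R := k))

/-- `h₁ ⊗ g ↦ h₁⁰g ⊗ h₁¹`. -/
noncomputable def phiC (ρ : H →ₗ[k] H ⊗[k] L) : H ⊗[k] H →ₗ[k] H ⊗[k] L :=
  (LinearMap.rTensor L (LinearMap.mul' k H)) ∘ₗ (swapR k H L H) ∘ₗ (LinearMap.rTensor H ρ)

/-- `(h₁ ⊗ h₂) ⊗ (g⁰ ⊗ g¹) ↦ h₁⁰g⁰ ⊗ h₁¹(h₂ ⇀ g¹)`. -/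
noncomputable def cAssemble (act : H →ₗ[k] L →ₗ[k] L) (ρ : H →ₗ[k] H ⊗[k] L) :
    (H ⊗[k] H) ⊗[k] (H ⊗[k] L) →ₗ[k] H ⊗[k] L :=
  (LinearMap.lTensor H (LinearMap.mul' k L))
    ∘ₗ (TensorProduct.assoc k H L L).toLinearMap
    ∘ₗ (TensorProduct.map (phiC k ρ) (actT k act))
    ∘ₗ (TensorProduct.tensorTensorTensorComm k H H H L).toLinearMap

/-- `h ↦ Σ h₁⁰g⁰ ⊗ h₁¹(h₂ ⇀ g¹)`. -/
noncomputable def gammaMap (act : H →ₗ[k] L →ₗ[k] L) (ρ : H →ₗ[k] H ⊗[k] L) (g : H) :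
    H →ₗ[k] H ⊗[k] L :=
  (cAssemble k act ρ)
    ∘ₗ ((TensorProduct.mk k (H ⊗[k] H) (H ⊗[k] L)).flip (ρ g))
    ∘ₗ (Coalgebra.comul (R := k))

/-- `h ↦ Σ h₃⁰g⁰ ⊗ (h₁⁰ ⇀ x₁) ⊗ h₁¹(h₂ ⇀ x₂)h₃¹(h₄ ⇀ g¹)`: the right hand side of the
compatibility condition (iii) of a partial matched pair. -/
noncomputable def mpRHS (act : H →ₗ[k] L →ₗ[k] L) (ρ : H →ₗ[k] H ⊗[k] L) (g : H) (x : L) :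
    H →ₗ[k] H ⊗[k] (L ⊗[k] L) :=
  psiMap k ∘ₗ (TensorProduct.map (betaMap k act ρ x) (gammaMap k act ρ g))
    ∘ₗ (Coalgebra.comul (R := k))

/-- `h ↦ Σ ε_H(h⁰) h¹`. -/
noncomputable def coactCounit (ρ : H →ₗ[k] H ⊗[k] L) : H →ₗ[k] L :=
  (TensorProduct.lid k L).toLinearMap
    ∘ₗ (LinearMap.rTensor L (Coalgebra.counit (R := k))) ∘ₗ ρ

variable (H L)

/-- Definition 3.1: `(H, L)` is a partial matched pair of Hopf algebras. -/
structure IsPartialMatchedPair (act : H →ₗ[k] L →ₗ[k] L) (ρ : H →ₗ[k] H ⊗[k] L) : Prop where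
  action : IsPartialAction k H L act
  coaction : IsPartialCoaction k L H ρ
  compat : ∀ (h g : H) (x : L), mpLHS k act ρ g x h = mpRHS k act ρ g x h
  counit_act : ∀ (h : H) (x : L),
    Coalgebra.counit (R := k) (act h x)
      = Coalgebra.counit (R := k) (act h 1) * Coalgebra.counit (R := k) x
  coact_one : ρ 1 = (1 : H) ⊗ₜ[k] (coactCounit k ρ (1 : H))

/-- Definition 3.5: quasi-abelian condition
`Σ h₂⁰ ⊗ (h₁ ⇀ x)h₂¹ = Σ h₁⁰ ⊗ h₁¹(h₂ ⇀ x)`. -/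
def IsQuasiAbelian (act : H →ₗ[k] L →ₗ[k] L) (ρ : H →ₗ[k] H ⊗[k] L) : Prop :=
  ∀ (h : H) (x : L),
    ((LinearMap.lTensor H (LinearMap.mul' k L))
        ∘ₗ (TensorProduct.assoc k H L L).toLinearMap
        ∘ₗ (LinearMap.rTensor L (TensorProduct.comm k L H).toLinearMap)
        ∘ₗ (TensorProduct.assoc k L H L).symm.toLinearMap)
      ((TensorProduct.map (act.flip x) ρ) (Coalgebra.comul (R := k) h))
    = ((LinearMap.lTensor H (LinearMap.mul' k L))
        ∘ₗ (TensorProduct.assoc k H L L).toLinearMap)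
      ((TensorProduct.map ρ (act.flip x)) (Coalgebra.comul (R := k) h))

end MatchedPair

section Lemma8ii

variable {k H L : Type*} [Field k] [Ring H] [HopfAlgebra k H] [Ring L] [HopfAlgebra k L]

/-- Iterated comultiplication `h ↦ Σ (h₁ ⊗ h₂) ⊗ h₃`. -/
noncomputable def delta3 : H →ₗ[k] (H ⊗[k] H) ⊗[k] H :=
  (LinearMap.rTensor H (Coalgebra.comul (R := k))) ∘ₗ (Coalgebra.comul (R := k))

/-- Iterated comultiplication `h ↦ Σ ((h₁ ⊗ h₂) ⊗ h₃) ⊗ h₄`. -/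
noncomputable def delta4 : H →ₗ[k] ((H ⊗[k] H) ⊗[k] H) ⊗[k] H :=
  (LinearMap.rTensor H (delta3 (k := k) (H := H))) ∘ₗ (Coalgebra.comul (R := k))

/-- `(v₁ ⊗ v₂) ⊗ (a ⊗ y) ↦ (v₁ ⊗ a) ⊗ v₂y`. -/
noncomputable def pOne : (L ⊗[k] L) ⊗[k] (H ⊗[k] L) →ₗ[k] (L ⊗[k] H) ⊗[k] L :=
  (TensorProduct.map LinearMap.id (LinearMap.mul' k L))
    ∘ₗ (TensorProduct.tensorTensorTensorComm k L L H L).toLinearMap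

/-- Regrouping `((v₁ ⊗ a) ⊗ w) ⊗ b ↦ v₁ ⊗ (a ⊗ (w ⊗ b))`. -/
noncomputable def pTwo : ((L ⊗[k] H) ⊗[k] L) ⊗[k] H →ₗ[k] L ⊗[k] (H ⊗[k] (L ⊗[k] H)) :=
  (TensorProduct.assoc k L H (L ⊗[k] H)).toLinearMap
    ∘ₗ (TensorProduct.assoc k (L ⊗[k] H) L H).toLinearMap

/-- `((v₁ ⊗ a) ⊗ w) ⊗ u ↦ (v₁ ⊗ a) ⊗ wu`. -/
noncomputable def pThree : ((L ⊗[k] H) ⊗[k] L) ⊗[k] L →ₗ[k] (L ⊗[k] H) ⊗[k] L :=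
  (LinearMap.lTensor (L ⊗[k] H) (LinearMap.mul' k L))
    ∘ₗ (TensorProduct.assoc k (L ⊗[k] H) L L).toLinearMap

/-- `h₁ ↦ Δ_L(x)·Δ_L(h₁ ⇀ 1_L) = Σ x₁(h₁ ⇀ 1_L)₁ ⊗ x₂(h₁ ⇀ 1_L)₂`. -/
noncomputable def dOne (act : H →ₗ[k] L →ₗ[k] L) (x : L) : H →ₗ[k] L ⊗[k] L :=
  (LinearMap.mulLeft k (Coalgebra.comul (R := k) x))
    ∘ₗ (Coalgebra.comul (R := k)) ∘ₗ act.flip 1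

/-- `h₁ ↦ Δ_L(x)·((h₁⁰ ⇀ 1_L) ⊗ h₁¹) = Σ x₁(h₁⁰ ⇀ 1_L) ⊗ x₂h₁¹`. -/
noncomputable def eOne (act : H →ₗ[k] L →ₗ[k] L) (ρ : H →ₗ[k] H ⊗[k] L) (x : L) :
    H →ₗ[k] L ⊗[k] L :=
  (LinearMap.mulLeft k (Coalgebra.comul (R := k) x))
    ∘ₗ (LinearMap.rTensor L (act.flip 1)) ∘ₗ ρ

section Aux
open Coalgebra
set_option synthInstance.maxHeartbeats 800000
set_option maxHeartbeats 1600000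
variable (act : H →ₗ[k] L →ₗ[k] L) (ρ : H →ₗ[k] H ⊗[k] L)

/-- ε-collapse on the first leg: `v ⊗ w ↦ ε(v) w`. -/
noncomputable def killL : L ⊗[k] L →ₗ[k] L :=
  (TensorProduct.lid k L).toLinearMap ∘ₗ (rTensor L (Coalgebra.counit (R := k)))

@[simp] theorem killL_tmul (v w : L) : killL (v ⊗ₜ[k] w) = counit (R := k) v • w := by
  simp [killL]

theorem killL_comul : (killL : L ⊗[k] L →ₗ[k] L) ∘ₗ Coalgebra.comul = LinearMap.id := by
  ext y; simp [killL, Coalgebra.rTensor_counit_comul]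

/-- `v ⊗ (a ⊗ w) ↦ a ⊗ (v*w)`. -/
noncomputable def Gst : L ⊗[k] (H ⊗[k] L) →ₗ[k] H ⊗[k] L :=
  (lTensor H (mul' k L)) ∘ₗ (TensorProduct.assoc k H L L).toLinearMap
    ∘ₗ (rTensor L (TensorProduct.comm k L H).toLinearMap)
    ∘ₗ (TensorProduct.assoc k L H L).symm.toLinearMap

@[simp] theorem Gst_tmul (v : L) (a : H) (w : L) :
    (Gst : L ⊗[k] (H ⊗[k] L) →ₗ[k] H ⊗[k] L) (v ⊗ₜ (a ⊗ₜ w)) = a ⊗ₜ (v * w) := by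
  simp [Gst]

/-- `(a ⊗ w) ⊗ z ↦ a ⊗ (w*z)`. -/
noncomputable def cmb : (H ⊗[k] L) ⊗[k] L →ₗ[k] H ⊗[k] L :=
  (lTensor H (mul' k L)) ∘ₗ (TensorProduct.assoc k H L L).toLinearMap

@[simp] theorem cmb_tmul (a : H) (w z : L) :
    (cmb : (H ⊗[k] L) ⊗[k] L →ₗ[k] H ⊗[k] L) ((a ⊗ₜ w) ⊗ₜ z) = a ⊗ₜ (w * z) := by
  simp [cmb]

@[simp] theorem swapR_tmul {M N P : Type*} [AddCommGroup M] [AddCommGroup N] [AddCommGroup P]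
    [Module k M] [Module k N] [Module k P] (m : M) (n : N) (p : P) :
    swapR k M N P ((m ⊗ₜ n) ⊗ₜ p) = (m ⊗ₜ p) ⊗ₜ n := by
  simp [swapR]

@[simp] theorem psiMap_tmul (v w : L) (a : H) (y : L) :
    psiMap k ((v ⊗ₜ w) ⊗ₜ (a ⊗ₜ y)) = a ⊗ₜ[k] (v ⊗ₜ[k] (w * y)) := by
  simp [psiMap]

@[simp] theorem pOne_tmul (v w : L) (a : H) (y : L) :
    (pOne : (L ⊗[k] L) ⊗[k] (H ⊗[k] L) →ₗ[k] (L ⊗[k] H) ⊗[k] L) ((v ⊗ₜ w) ⊗ₜ (a ⊗ₜ y))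
      = (v ⊗ₜ a) ⊗ₜ (w * y) := by
  simp [pOne]

@[simp] theorem pThree_tmul (v : L) (a : H) (w z : L) :
    (pThree : ((L ⊗[k] H) ⊗[k] L) ⊗[k] L →ₗ[k] (L ⊗[k] H) ⊗[k] L) (((v ⊗ₜ a) ⊗ₜ w) ⊗ₜ z)
      = (v ⊗ₜ a) ⊗ₜ (w * z) := by
  simp [pThree]

@[simp] theorem pTwo_tmul (v : L) (a : H) (w : L) (b : H) :
    (pTwo : ((L ⊗[k] H) ⊗[k] L) ⊗[k] H →ₗ[k] L ⊗[k] (H ⊗[k] (L ⊗[k] H))) (((v ⊗ₜ a) ⊗ₜ w) ⊗ₜ b)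
      = v ⊗ₜ (a ⊗ₜ (w ⊗ₜ b)) := by
  simp [pTwo]

@[simp] theorem actT_tmul (h : H) (y : L) : actT k act (h ⊗ₜ y) = act h y := by
  simp [actT]

/-- `a ⊗ (v ⊗ w) ↦ (v ⊗ a) ⊗ w`. -/
noncomputable def reoM : H ⊗[k] (L ⊗[k] L) →ₗ[k] (L ⊗[k] H) ⊗[k] L :=
  (rTensor L (TensorProduct.comm k H L).toLinearMap)
    ∘ₗ (TensorProduct.assoc k H L L).symm.toLinearMap

@[simp] theorem reoM_tmul (a : H) (v w : L) :
    (reoM : H ⊗[k] (L ⊗[k] L) →ₗ[k] (L ⊗[k] H) ⊗[k] L) (a ⊗ₜ (v ⊗ₜ w)) = (v ⊗ₜ a) ⊗ₜ w := by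
  simp [reoM]


/-- `Σ h₁⁰ ⊗ h₁¹ (h₂ ⇀ y)`. -/
noncomputable def KB (y : L) : H ⊗[k] H →ₗ[k] H ⊗[k] L :=
  cmb ∘ₗ (TensorProduct.map ρ (act.flip y))

noncomputable def Km (y : L) : H →ₗ[k] H ⊗[k] L := KB act ρ y ∘ₗ comul

/-- `Σ h₂⁰ ⊗ (h₁ ⇀ y) h₂¹`. -/
noncomputable def QB (y : L) : H ⊗[k] H →ₗ[k] H ⊗[k] L :=
  Gst ∘ₗ (TensorProduct.map (act.flip y) ρ)

noncomputable def Qm (y : L) : H →ₗ[k] H ⊗[k] L := QB act ρ y ∘ₗ comul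

theorem cmb_assoc :
    (cmb : (H ⊗[k] L) ⊗[k] L →ₗ[k] H ⊗[k] L)
      = (lTensor H (mul' k L)) ∘ₗ (TensorProduct.assoc k H L L).toLinearMap := rfl

theorem qa_eq (hqa : IsQuasiAbelian k H L act ρ) (y : L) : Qm act ρ y = Km act ρ y := by
  apply LinearMap.ext; intro h
  have := hqa h y
  simpa [Qm, Km, QB, KB, Gst, cmb] using this

theorem actmul_map (hpmp : IsPartialMatchedPair k H L act ρ) (y z : L) :
    (mul' k L) ∘ₗ (TensorProduct.map (act.flip y) (act.flip z)) ∘ₗ comul = act.flip (y * z) := by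
  apply LinearMap.ext; intro h
  simpa using (hpmp.action.act_mul h y z).symm

noncomputable def uu : L := coactCounit k ρ 1

theorem rho_one (hpmp : IsPartialMatchedPair k H L act ρ) :
    ρ 1 = (1 : H) ⊗ₜ[k] uu ρ := hpmp.coact_one

theorem uu_mul (hpmp : IsPartialMatchedPair k H L act ρ) : uu ρ * uu ρ = uu ρ := by
  have h2 := hpmp.coaction.comul_coact (1 : H)
  rw [rho_one _ _ hpmp] at h2
  have hΔ : Coalgebra.comul (R := k) (1 : H) = (1 : H) ⊗ₜ[k] (1 : H) := by
    rw [Bialgebra.comul_one]; rfl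
  rw [hΔ] at h2
  -- h2 : rTensor L comul ((1 ⊗ uu)) = coactPairMul k L H ρ (1 ⊗ 1)
  have h2' : ((1:H) ⊗ₜ[k] (1:H)) ⊗ₜ[k] uu ρ
      = ((1:H) ⊗ₜ[k] (1:H)) ⊗ₜ[k] (uu ρ * uu ρ) := by
    simpa [coactPairMul, hΔ, rho_one _ _ hpmp] using h2
  have := congrArg ((TensorProduct.lid k L).toLinearMap ∘ₗ
      rTensor L ((Coalgebra.counit (R := k)) ∘ₗ (mul' k H))) h2'
  simpa using this.symm

theorem swapR_mulH (c : H) (w : H ⊗[k] L) :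
    (rTensor L (mul' k H)) (swapR k H L H (w ⊗ₜ c)) = (rTensor L (mulRight k c)) w := by
  induction w using TensorProduct.induction_on with
  | zero => simp
  | tmul a l => simp
  | add u v hu hv => simp [add_tmul, hu, hv]

theorem swapR_act (y : L) (w : H ⊗[k] L) :
    (rTensor L (actT k act)) (swapR k H L L (w ⊗ₜ y)) = (rTensor L (act.flip y)) w := by
  induction w using TensorProduct.induction_on with
  | zero => simp
  | tmul a l => simp
  | add u v hu hv => simp [add_tmul, hu, hv]

theorem phiB_app (y : L) (h : H) :
    phiB k act ρ (h ⊗ₜ y) = (rTensor L (act.flip y)) (ρ h) := by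
  simp only [phiB, comp_apply, rTensor_tmul, LinearMap.id_apply]
  exact swapR_act act y (ρ h)

theorem phiC_app (c : H) (h : H) :
    phiC k ρ (h ⊗ₜ c) = (rTensor L (mulRight k c)) (ρ h) := by
  simp only [phiC, comp_apply, rTensor_tmul, LinearMap.id_apply]
  exact swapR_mulH c (ρ h)

/-- `Σ (h⁰ ⇀ 1) ⊗ h¹`. -/
noncomputable def Phi1 : H →ₗ[k] L ⊗[k] L := (rTensor L (act.flip 1)) ∘ₗ ρ

noncomputable def lam : H →ₗ[k] L := killL ∘ₗ Phi1 act ρ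

noncomputable def laA (y : L) : H →ₗ[k] L :=
  (mul' k L) ∘ₗ (TensorProduct.map (lam act ρ) (act.flip y)) ∘ₗ comul

theorem gam1 (hpmp : IsPartialMatchedPair k H L act ρ) :
    gammaMap k act ρ (1 : H) = Km act ρ (uu ρ) := by
  apply LinearMap.ext; intro h0
  have key : ∀ z : H ⊗[k] H,
      cAssemble k act ρ (z ⊗ₜ ((1:H) ⊗ₜ[k] uu ρ)) = KB act ρ (uu ρ) z := by
    intro z
    induction z using TensorProduct.induction_on with
    | zero => simp
    | tmul h1 h2 =>
        simp only [cAssemble, KB, comp_apply, LinearEquiv.coe_coe,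
          tensorTensorTensorComm_tmul, map_tmul, actT_tmul, cmb,
          phiC_app, LinearMap.mulRight_one, rTensor_id, LinearMap.id_coe, id_eq, flip_apply]
    | add u v hu hv => simp only [add_tmul, map_add, hu, hv]
  simp only [gammaMap, Km, comp_apply, flip_apply, TensorProduct.mk_apply,
    rho_one _ _ hpmp]
  exact key _

theorem beta1 : betaMap k act ρ (1 : L)
    = (lTensor L (mul' k L)) ∘ₗ (TensorProduct.assoc k L L L).toLinearMap
        ∘ₗ (TensorProduct.map (Phi1 act ρ) (act.flip 1)) ∘ₗ comul := by
  apply LinearMap.ext; intro h0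
  have hΔ : Coalgebra.comul (R := k) (1 : L) = (1 : L) ⊗ₜ[k] (1 : L) := by
    rw [Bialgebra.comul_one]; rfl
  have key : ∀ z : H ⊗[k] H,
      bAssemble k act ρ (z ⊗ₜ ((1:L) ⊗ₜ[k] (1:L)))
        = ((lTensor L (mul' k L)) ∘ₗ (TensorProduct.assoc k L L L).toLinearMap
            ∘ₗ (TensorProduct.map (Phi1 act ρ) (act.flip 1))) z := by
    intro z
    induction z using TensorProduct.induction_on with
    | zero => simp
    | tmul h1 h2 =>
        simp only [bAssemble, comp_apply, LinearEquiv.coe_coe,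
          tensorTensorTensorComm_tmul, map_tmul, actT_tmul, phiB_app, Phi1, flip_apply]
    | add u v hu hv => simp only [add_tmul, map_add, hu, hv]
  simp only [betaMap, comp_apply, flip_apply, TensorProduct.mk_apply, hΔ]
  exact key _

theorem killL_lmul (P : L ⊗[k] L) (c : L) :
    killL ((lTensor L (mul' k L)) ((TensorProduct.assoc k L L L) (P ⊗ₜ c)))
      = killL P * c := by
  induction P using TensorProduct.induction_on with
  | zero => simp
  | tmul p q => simp [smul_mul_assoc]
  | add u v hu hv => simp [add_tmul, hu, hv, add_mul]

theorem killL_act (hpmp : IsPartialMatchedPair k H L act ρ) (y : L) (w : H ⊗[k] L) :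
    killL ((rTensor L (act.flip y)) w)
      = Coalgebra.counit (R := k) y • killL ((rTensor L (act.flip 1)) w) := by
  induction w using TensorProduct.induction_on with
  | zero => simp
  | tmul a l =>
      simp only [rTensor_tmul, flip_apply, killL_tmul, hpmp.counit_act a y, smul_smul]
      rw [mul_comm]
  | add u v hu hv => simp [hu, hv]

theorem beta_kill (hpmp : IsPartialMatchedPair k H L act ρ) (y : L) :
    killL ∘ₗ betaMap k act ρ y = laA act ρ y := by
  apply LinearMap.ext; intro h0
  have key : ∀ (z : H ⊗[k] H) (w : L ⊗[k] L),
      killL (bAssemble k act ρ (z ⊗ₜ w))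
        = (mul' k L) ((TensorProduct.map (lam act ρ) (act.flip (killL w))) z) := by
    intro z w
    induction z using TensorProduct.induction_on with
    | zero => simp
    | tmul h1 h2 =>
        induction w using TensorProduct.induction_on with
        | zero => simp
        | tmul y1 y2 =>
            simp only [bAssemble, comp_apply, LinearEquiv.coe_coe,
              tensorTensorTensorComm_tmul, map_tmul, actT_tmul, phiB_app]
            rw [killL_lmul, killL_act act ρ hpmp y1]
            simp only [map_tmul, mul'_apply, flip_apply, killL_tmul, lam, Phi1,
              comp_apply, LinearMap.smul_apply, smul_mul_assoc, mul_smul_comm, map_smul]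
        | add u v hu hv =>
            simp [tmul_add, map_add, hu, hv, TensorProduct.map_add_right]
    | add u v hu hv => simp only [add_tmul, map_add, hu, hv]
  simp only [betaMap, laA, comp_apply, flip_apply, TensorProduct.mk_apply]
  rw [key]
  have hy : killL (Coalgebra.comul (R := k) y) = y := by
    simpa using LinearMap.congr_fun (killL_comul (k := k) (L := L)) y
  rw [hy]

@[simp] theorem killL_comul_apply (y : L) : killL (Coalgebra.comul (R := k) y) = y := by
  simpa using LinearMap.congr_fun (killL_comul (k := k) (L := L)) y

noncomputable def NFm (y : L) : H →ₗ[k] H ⊗[k] L :=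
  Gst ∘ₗ (TensorProduct.map (laA act ρ y) (Km act ρ (uu ρ))) ∘ₗ comul

noncomputable def MFm (y : L) : H →ₗ[k] H ⊗[k] L :=
  Gst ∘ₗ (TensorProduct.map (lam act ρ) (Km act ρ y)) ∘ₗ comul

noncomputable def Frm : L ⊗[k] ((H ⊗[k] L) ⊗[k] L) →ₗ[k] H ⊗[k] L :=
  Gst ∘ₗ (lTensor L cmb)

theorem S1a : (lTensor H killL) ∘ₗ psiMap k
    = (Gst : L ⊗[k] (H ⊗[k] L) →ₗ[k] H ⊗[k] L) ∘ₗ (rTensor (H ⊗[k] L) killL) := by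
  ext v w a y
  simp [smul_mul_assoc]

theorem RTmap (f : H →ₗ[k] L ⊗[k] L) (g : H →ₗ[k] H ⊗[k] L) (z : H ⊗[k] H) :
    (rTensor (H ⊗[k] L) killL) ((TensorProduct.map f g) z)
      = (TensorProduct.map (killL ∘ₗ f) g) z := by
  induction z using TensorProduct.induction_on with
  | zero => simp
  | tmul a b => simp
  | add u v hu hv => simp [hu, hv]

theorem NL (y : L) : (lTensor H killL) ∘ₗ mpLHS k act ρ 1 y = Qm act ρ y := by
  apply LinearMap.ext; intro h
  simp only [mpLHS, Qm, QB, comp_apply, LinearMap.mulRight_one, comp_id]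
  have e := LinearMap.congr_fun S1a
    ((TensorProduct.map ((Coalgebra.comul (R := k)) ∘ₗ act.flip y) ρ) (comul h))
  simp only [comp_apply] at e
  rw [e, RTmap]
  congr 2
  rw [← comp_assoc, killL_comul, id_comp]

theorem NR (hpmp : IsPartialMatchedPair k H L act ρ) (y : L) :
    (lTensor H killL) ∘ₗ mpRHS k act ρ 1 y = NFm act ρ y := by
  apply LinearMap.ext; intro h
  simp only [mpRHS, NFm, comp_apply]
  have e := LinearMap.congr_fun S1a
    ((TensorProduct.map (betaMap k act ρ y) (gammaMap k act ρ 1)) (comul h))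
  simp only [comp_apply] at e
  rw [e, RTmap]
  rw [beta_kill act ρ hpmp y, gam1 act ρ hpmp]

theorem compat_map (hpmp : IsPartialMatchedPair k H L act ρ) (y : L) :
    mpLHS k act ρ 1 y = mpRHS k act ρ 1 y :=
  LinearMap.ext fun h => hpmp.compat h 1 y

theorem Nid (hpmp : IsPartialMatchedPair k H L act ρ) (y : L) :
    Qm act ρ y = NFm act ρ y := by
  rw [← NL, compat_map act ρ hpmp y, NR act ρ hpmp y]

/-- `Σ λ(h₁) (h₂ ⇀ y)` body. -/
noncomputable def LAp (y : L) : H ⊗[k] H →ₗ[k] L :=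
  (mul' k L) ∘ₗ (TensorProduct.map (lam act ρ) (act.flip y))

theorem laA_eq (y : L) : laA act ρ y = (LAp act ρ y) ∘ₗ comul := rfl

theorem natA (x : H ⊗[k] (H ⊗[k] H)) :
    (lTensor (H ⊗[k] H) (Coalgebra.comul (R := k)))
        ((TensorProduct.assoc k H H H).symm x)
      = (TensorProduct.assoc k H H (H ⊗[k] H)).symm
          ((lTensor H (lTensor H (Coalgebra.comul (R := k)))) x) := by
  induction x using TensorProduct.induction_on with
  | zero => simp
  | tmul a z =>
      induction z using TensorProduct.induction_on with
      | zero => simp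
      | tmul b c => simp
      | add u v hu hv => simp [tmul_add, hu, hv]
  | add u v hu hv => simp [hu, hv]

theorem DD (h : H) :
    (TensorProduct.map (Coalgebra.comul (R := k)) (Coalgebra.comul)) (Coalgebra.comul h)
      = (TensorProduct.assoc k H H (H ⊗[k] H)).symm
          ((lTensor H (lTensor H (Coalgebra.comul (R := k))))
            ((lTensor H (Coalgebra.comul (R := k))) (Coalgebra.comul h))) := by
  have e1 : (TensorProduct.map (Coalgebra.comul (R := k)) (Coalgebra.comul (R := k)))
        ((Coalgebra.comul (R := k)) h)
      = (lTensor (H ⊗[k] H) (Coalgebra.comul (R := k)))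
          ((rTensor H (Coalgebra.comul (R := k))) ((Coalgebra.comul (R := k)) h)) := by
    generalize (Coalgebra.comul (R := k)) h = z
    induction z using TensorProduct.induction_on with
    | zero => simp
    | tmul a b => simp
    | add u v hu hv => simp [hu, hv]
  rw [e1, ← Coalgebra.coassoc_symm_apply, natA]

theorem INL (y z : L) :
    (TensorProduct.map (Qm act ρ y) (act.flip z)) ∘ₗ (Coalgebra.comul (R := k))
      = (TensorProduct.map (QB act ρ y) (act.flip z))
          ∘ₗ (TensorProduct.assoc k H H H).symm.toLinearMap
          ∘ₗ (lTensor H (Coalgebra.comul (R := k))) ∘ₗ Coalgebra.comul := by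
  rw [show Qm act ρ y = QB act ρ y ∘ₗ Coalgebra.comul from rfl]
  rw [← map_comp_rTensor, comp_assoc, ← Coalgebra.coassoc_symm]

theorem bodyA (y : L) :
    Gst ∘ₗ (TensorProduct.map (LAp act ρ y) (KB act ρ (uu ρ)))
        ∘ₗ (TensorProduct.assoc k H H (H ⊗[k] H)).symm.toLinearMap
      = Frm ∘ₗ (TensorProduct.map (lam act ρ)
          ((TensorProduct.map (QB act ρ y) (act.flip (uu ρ)))
            ∘ₗ (TensorProduct.assoc k H H H).symm.toLinearMap)) := by
  ext h1 h2 h3 h4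
  simp only [TensorProduct.AlgebraTensorModule.curry_apply, TensorProduct.curry_apply,
    LinearMap.coe_restrictScalars, compr₂_apply, TensorProduct.mk_apply, comp_apply,
    LinearEquiv.coe_coe, assoc_symm_tmul, map_tmul, LAp, KB, QB, Frm, mul'_apply, flip_apply]
  generalize ρ h3 = w
  induction w using TensorProduct.induction_on with
  | zero => simp
  | tmul a l => simp [mul_assoc]
  | add w1 w2 hw1 hw2 => simp [tmul_add, add_tmul, hw1, hw2]

theorem claimA (y : L) :
    NFm act ρ y
      = Frm ∘ₗ (TensorProduct.map (lam act ρ)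
            (TensorProduct.map (Qm act ρ y) (act.flip (uu ρ))))
          ∘ₗ (lTensor H (Coalgebra.comul (R := k))) ∘ₗ Coalgebra.comul := by
  apply LinearMap.ext; intro h
  simp only [NFm, comp_apply]
  rw [laA_eq, show Km act ρ (uu ρ) = KB act ρ (uu ρ) ∘ₗ Coalgebra.comul from rfl, map_comp]
  simp only [comp_apply]
  rw [DD]
  have eL := LinearMap.congr_fun (bodyA act ρ y)
    ((lTensor H (lTensor H (Coalgebra.comul (R := k))))
      ((lTensor H (Coalgebra.comul (R := k))) (Coalgebra.comul h)))
  simp only [comp_apply, LinearEquiv.coe_coe] at eL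
  rw [eL]
  congr 1
  -- RHS of goal to the same normal form
  have a1 := LinearMap.congr_fun (map_comp_lTensor _ (lam act ρ)
      (TensorProduct.map (Qm act ρ y) (act.flip (uu ρ))) (Coalgebra.comul (R := k)))
    (Coalgebra.comul h)
  simp only [comp_apply] at a1
  have a2 : (TensorProduct.map (Qm act ρ y) (act.flip (uu ρ))) ∘ₗ (Coalgebra.comul (R := k))
      = ((TensorProduct.map (QB act ρ y) (act.flip (uu ρ)))
          ∘ₗ (TensorProduct.assoc k H H H).symm.toLinearMap)
        ∘ₗ ((lTensor H (Coalgebra.comul (R := k))) ∘ₗ Coalgebra.comul) := by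
    rw [INL act ρ y (uu ρ)]
    rfl
  have a3 := LinearMap.congr_fun (map_comp_lTensor _ (lam act ρ)
      ((TensorProduct.map (QB act ρ y) (act.flip (uu ρ)))
          ∘ₗ (TensorProduct.assoc k H H H).symm.toLinearMap)
      ((lTensor H (Coalgebra.comul (R := k))) ∘ₗ Coalgebra.comul))
    (Coalgebra.comul h)
  simp only [comp_apply, lTensor_comp] at a3
  rw [← a1.symm, a2, ← a3]

theorem INLB (y z : L) :
    (TensorProduct.map (Km act ρ y) (act.flip z)) ∘ₗ (Coalgebra.comul (R := k))
      = (TensorProduct.map (KB act ρ y) (act.flip z))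
          ∘ₗ (TensorProduct.assoc k H H H).symm.toLinearMap
          ∘ₗ (lTensor H (Coalgebra.comul (R := k))) ∘ₗ Coalgebra.comul := by
  rw [show Km act ρ y = KB act ρ y ∘ₗ Coalgebra.comul from rfl]
  rw [← map_comp_rTensor, comp_assoc, ← Coalgebra.coassoc_symm]

theorem bodyB (hpmp : IsPartialMatchedPair k H L act ρ) (y z : L) :
    Gst ∘ₗ (TensorProduct.map (lam act ρ) (KB act ρ (y * z)))
      = Frm ∘ₗ (TensorProduct.map (lam act ρ)
            ((TensorProduct.map (KB act ρ y) (act.flip z))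
              ∘ₗ (TensorProduct.assoc k H H H).symm.toLinearMap))
          ∘ₗ (lTensor H (lTensor H (Coalgebra.comul (R := k)))) := by
  ext h1 h2 h3
  simp only [TensorProduct.AlgebraTensorModule.curry_apply, TensorProduct.curry_apply,
    LinearMap.coe_restrictScalars, compr₂_apply, TensorProduct.mk_apply, comp_apply,
    LinearEquiv.coe_coe, map_tmul, lTensor_tmul, KB, Frm, mul'_apply, flip_apply]
  rw [hpmp.action.act_mul h3 y z]
  generalize (Coalgebra.comul (R := k)) h3 = v
  induction v using TensorProduct.induction_on with
  | zero => simp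
  | tmul p q =>
      simp only [LinearEquiv.coe_coe, assoc_symm_tmul, map_tmul, KB, comp_apply,
        flip_apply, Frm, lTensor_tmul]
      generalize ρ h2 = w
      induction w using TensorProduct.induction_on with
      | zero => simp
      | tmul a l => simp [mul_assoc]
      | add w1 w2 hw1 hw2 =>
          simp only [mul'_apply] at hw1 hw2
          simp [add_tmul, tmul_add, hw1, hw2]
  | add v1 v2 hv1 hv2 => simp [add_tmul, tmul_add, map_add, hv1, hv2]

theorem claimB (hpmp : IsPartialMatchedPair k H L act ρ) (y z : L) :
    MFm act ρ (y * z)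
      = Frm ∘ₗ (TensorProduct.map (lam act ρ)
            (TensorProduct.map (Km act ρ y) (act.flip z)))
          ∘ₗ (lTensor H (Coalgebra.comul (R := k))) ∘ₗ Coalgebra.comul := by
  apply LinearMap.ext; intro h
  simp only [MFm, comp_apply]
  -- LHS
  have b1 := LinearMap.congr_fun (map_comp_lTensor _ (lam act ρ)
      (KB act ρ (y * z)) (Coalgebra.comul (R := k))) (Coalgebra.comul h)
  simp only [comp_apply] at b1
  rw [show Km act ρ (y * z) = KB act ρ (y * z) ∘ₗ Coalgebra.comul from rfl, ← b1]
  have b2 := LinearMap.congr_fun (bodyB act ρ hpmp y z)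
    ((lTensor H (Coalgebra.comul (R := k))) (Coalgebra.comul h))
  simp only [comp_apply] at b2
  rw [b2]
  congr 1
  -- RHS normal form (as in claimA)
  have a1 := LinearMap.congr_fun (map_comp_lTensor _ (lam act ρ)
      (TensorProduct.map (Km act ρ y) (act.flip z)) (Coalgebra.comul (R := k)))
    (Coalgebra.comul h)
  simp only [comp_apply] at a1
  have a2 : (TensorProduct.map (Km act ρ y) (act.flip z)) ∘ₗ (Coalgebra.comul (R := k))
      = ((TensorProduct.map (KB act ρ y) (act.flip z))
          ∘ₗ (TensorProduct.assoc k H H H).symm.toLinearMap)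
        ∘ₗ ((lTensor H (Coalgebra.comul (R := k))) ∘ₗ Coalgebra.comul) := by
    rw [INLB act ρ y z]
    rfl
  have a3 := LinearMap.congr_fun (map_comp_lTensor _ (lam act ρ)
      ((TensorProduct.map (KB act ρ y) (act.flip z))
          ∘ₗ (TensorProduct.assoc k H H H).symm.toLinearMap)
      ((lTensor H (Coalgebra.comul (R := k))) ∘ₗ Coalgebra.comul))
    (Coalgebra.comul h)
  simp only [comp_apply, lTensor_comp] at a3
  rw [← a1.symm, a2, ← a3]

theorem L11 (hpmp : IsPartialMatchedPair k H L act ρ) (hqa : IsQuasiAbelian k H L act ρ)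
    (y : L) : NFm act ρ y = MFm act ρ (y * uu ρ) := by
  rw [claimA act ρ y, qa_eq act ρ hqa y, claimB act ρ hpmp y (uu ρ)]

theorem L10 (hpmp : IsPartialMatchedPair k H L act ρ) (hqa : IsQuasiAbelian k H L act ρ) :
    Km act ρ (uu ρ) = Km act ρ (1 : L) := by
  have h1 : Km act ρ (uu ρ) = MFm act ρ (uu ρ) := by
    rw [← qa_eq act ρ hqa, Nid act ρ hpmp, L11 act ρ hpmp hqa, uu_mul act ρ hpmp]
  have h2 : Km act ρ (1 : L) = MFm act ρ (uu ρ) := by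
    rw [← qa_eq act ρ hqa, Nid act ρ hpmp, L11 act ρ hpmp hqa, one_mul]
  rw [h1, h2]

noncomputable def B1p : H ⊗[k] H →ₗ[k] L ⊗[k] L :=
  (lTensor L (mul' k L)) ∘ₗ (TensorProduct.assoc k L L L).toLinearMap
    ∘ₗ (TensorProduct.map (Phi1 act ρ) (act.flip 1))

theorem beta1' : betaMap k act ρ (1 : L) = B1p act ρ ∘ₗ Coalgebra.comul := beta1 act ρ

/-- `(p ⊗ q) ⊗ ((a ⊗ w) ⊗ z) ↦ (p ⊗ a) ⊗ (q*(w*z))`. -/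
noncomputable def Fr2 : (L ⊗[k] L) ⊗[k] ((H ⊗[k] L) ⊗[k] L) →ₗ[k] (L ⊗[k] H) ⊗[k] L :=
  pOne ∘ₗ (lTensor (L ⊗[k] L) cmb)

noncomputable def CoreL : H →ₗ[k] (L ⊗[k] H) ⊗[k] L :=
  pOne ∘ₗ (TensorProduct.map ((Coalgebra.comul (R := k)) ∘ₗ act.flip 1) ρ)
    ∘ₗ Coalgebra.comul

noncomputable def CoreR : H →ₗ[k] (L ⊗[k] H) ⊗[k] L :=
  pThree ∘ₗ (rTensor L pOne)
    ∘ₗ (TensorProduct.map (TensorProduct.map (Phi1 act ρ) ρ) (act.flip 1)) ∘ₗ delta3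

theorem reoM_psi : (reoM : H ⊗[k] (L ⊗[k] L) →ₗ[k] (L ⊗[k] H) ⊗[k] L) ∘ₗ psiMap k
    = pOne := by
  ext v w a y
  simp

theorem step0 : CoreL act ρ = reoM ∘ₗ mpLHS k act ρ 1 1 := by
  apply LinearMap.ext; intro h
  simp only [CoreL, mpLHS, comp_apply, LinearMap.mulRight_one, comp_id]
  have := LinearMap.congr_fun (reoM_psi (k := k) (H := H) (L := L))
    ((TensorProduct.map ((Coalgebra.comul (R := k)) ∘ₗ act.flip 1) ρ) (Coalgebra.comul h))
  simp only [comp_apply] at this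
  rw [this]

theorem step2 (hpmp : IsPartialMatchedPair k H L act ρ) :
    reoM ∘ₗ mpRHS k act ρ 1 1
      = pOne ∘ₗ (TensorProduct.map (betaMap k act ρ 1) (Km act ρ (uu ρ)))
          ∘ₗ Coalgebra.comul := by
  apply LinearMap.ext; intro h
  simp only [mpRHS, comp_apply, gam1 act ρ hpmp]
  have := LinearMap.congr_fun (reoM_psi (k := k) (H := H) (L := L))
    ((TensorProduct.map (betaMap k act ρ 1) (Km act ρ (uu ρ))) (Coalgebra.comul h))
  simp only [comp_apply] at this
  rw [this]

theorem bodyC :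
    pOne ∘ₗ (TensorProduct.map (B1p act ρ) (KB act ρ 1))
        ∘ₗ (TensorProduct.assoc k H H (H ⊗[k] H)).symm.toLinearMap
      = Fr2 ∘ₗ (TensorProduct.map (Phi1 act ρ)
          ((TensorProduct.map (QB act ρ 1) (act.flip 1))
            ∘ₗ (TensorProduct.assoc k H H H).symm.toLinearMap)) := by
  ext h1 h2 h3 h4
  simp only [TensorProduct.AlgebraTensorModule.curry_apply, TensorProduct.curry_apply,
    LinearMap.coe_restrictScalars, compr₂_apply, TensorProduct.mk_apply, comp_apply,
    LinearEquiv.coe_coe, assoc_symm_tmul, map_tmul, B1p, KB, QB, Fr2, Phi1,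
    mul'_apply, flip_apply]
  generalize ρ h1 = w1
  generalize ρ h3 = w3
  induction w1 using TensorProduct.induction_on with
  | zero => simp
  | tmul a1 l1 =>
      induction w3 using TensorProduct.induction_on with
      | zero => simp
      | tmul a3 l3 => simp [mul_assoc]
      | add u v hu hv =>
          simp only [rTensor_tmul, lTensor_tmul, flip_apply, assoc_tmul,
            mul'_apply] at hu hv
          simp [tmul_add, add_tmul, hu, hv]
  | add u v hu hv => simp [tmul_add, add_tmul, hu, hv]

theorem claimC :
    pOne ∘ₗ (TensorProduct.map (betaMap k act ρ 1) (Km act ρ 1)) ∘ₗ Coalgebra.comul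
      = Fr2 ∘ₗ (TensorProduct.map (Phi1 act ρ)
            (TensorProduct.map (Qm act ρ 1) (act.flip 1)))
          ∘ₗ (lTensor H (Coalgebra.comul (R := k))) ∘ₗ Coalgebra.comul := by
  apply LinearMap.ext; intro h
  simp only [comp_apply]
  rw [beta1', show Km act ρ (1 : L) = KB act ρ 1 ∘ₗ Coalgebra.comul from rfl, map_comp]
  simp only [comp_apply]
  rw [DD]
  have eL := LinearMap.congr_fun (bodyC act ρ)
    ((lTensor H (lTensor H (Coalgebra.comul (R := k))))
      ((lTensor H (Coalgebra.comul (R := k))) (Coalgebra.comul h)))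
  simp only [comp_apply, LinearEquiv.coe_coe] at eL
  rw [eL]
  congr 1
  have a1 := LinearMap.congr_fun (map_comp_lTensor _ (Phi1 act ρ)
      (TensorProduct.map (Qm act ρ 1) (act.flip 1)) (Coalgebra.comul (R := k)))
    (Coalgebra.comul h)
  simp only [comp_apply] at a1
  have a2 : (TensorProduct.map (Qm act ρ 1) (act.flip 1)) ∘ₗ (Coalgebra.comul (R := k))
      = ((TensorProduct.map (QB act ρ 1) (act.flip 1))
          ∘ₗ (TensorProduct.assoc k H H H).symm.toLinearMap)
        ∘ₗ ((lTensor H (Coalgebra.comul (R := k))) ∘ₗ Coalgebra.comul) := by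
    rw [INL act ρ 1 1]
    rfl
  have a3 := LinearMap.congr_fun (map_comp_lTensor _ (Phi1 act ρ)
      ((TensorProduct.map (QB act ρ 1) (act.flip 1))
          ∘ₗ (TensorProduct.assoc k H H H).symm.toLinearMap)
      ((lTensor H (Coalgebra.comul (R := k))) ∘ₗ Coalgebra.comul))
    (Coalgebra.comul h)
  simp only [comp_apply, lTensor_comp] at a3
  rw [← a1.symm, a2, ← a3]

theorem bodyD (hpmp : IsPartialMatchedPair k H L act ρ) (y z : L) :
    pOne ∘ₗ (TensorProduct.map (Phi1 act ρ) (KB act ρ (y * z)))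
      = Fr2 ∘ₗ (TensorProduct.map (Phi1 act ρ)
            ((TensorProduct.map (KB act ρ y) (act.flip z))
              ∘ₗ (TensorProduct.assoc k H H H).symm.toLinearMap))
          ∘ₗ (lTensor H (lTensor H (Coalgebra.comul (R := k)))) := by
  ext h1 h2 h3
  simp only [TensorProduct.AlgebraTensorModule.curry_apply, TensorProduct.curry_apply,
    LinearMap.coe_restrictScalars, compr₂_apply, TensorProduct.mk_apply, comp_apply,
    LinearEquiv.coe_coe, map_tmul, lTensor_tmul, KB, Fr2, Phi1, mul'_apply, flip_apply]
  rw [hpmp.action.act_mul h3 y z]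
  generalize (Coalgebra.comul (R := k)) h3 = v
  generalize ρ h1 = w1
  induction v using TensorProduct.induction_on with
  | zero =>
      induction w1 using TensorProduct.induction_on with
      | zero => simp
      | tmul a1 l1 => simp
      | add u v hu hv => simp [add_tmul, tmul_add, hu, hv]
  | tmul p q =>
      simp only [LinearEquiv.coe_coe, assoc_symm_tmul, map_tmul, comp_apply,
        flip_apply, lTensor_tmul, mul'_apply]
      generalize ρ h2 = w2
      induction w1 using TensorProduct.induction_on with
      | zero => simp
      | tmul a1 l1 =>
          induction w2 using TensorProduct.induction_on with
          | zero => simp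
          | tmul a2 l2 => simp [mul_assoc]
          | add u v hu hv =>
              simp only [rTensor_tmul, flip_apply] at hu hv
              simp [add_tmul, tmul_add, hu, hv]
      | add u v hu hv =>
          simp [add_tmul, tmul_add, hu, hv]
  | add v1 v2 hv1 hv2 =>
      simp only [map_add, tmul_add, add_tmul] at hv1 hv2 ⊢
      simp [hv1, hv2]

theorem claimD (hpmp : IsPartialMatchedPair k H L act ρ) (y z : L) :
    pOne ∘ₗ (TensorProduct.map (Phi1 act ρ) (Km act ρ (y * z))) ∘ₗ Coalgebra.comul
      = Fr2 ∘ₗ (TensorProduct.map (Phi1 act ρ)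
            (TensorProduct.map (Km act ρ y) (act.flip z)))
          ∘ₗ (lTensor H (Coalgebra.comul (R := k))) ∘ₗ Coalgebra.comul := by
  apply LinearMap.ext; intro h
  simp only [comp_apply]
  have b1 := LinearMap.congr_fun (map_comp_lTensor _ (Phi1 act ρ)
      (KB act ρ (y * z)) (Coalgebra.comul (R := k))) (Coalgebra.comul h)
  simp only [comp_apply] at b1
  rw [show Km act ρ (y * z) = KB act ρ (y * z) ∘ₗ Coalgebra.comul from rfl, ← b1]
  have b2 := LinearMap.congr_fun (bodyD act ρ hpmp y z)
    ((lTensor H (Coalgebra.comul (R := k))) (Coalgebra.comul h))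
  simp only [comp_apply] at b2
  rw [b2]
  congr 1
  have a1 := LinearMap.congr_fun (map_comp_lTensor _ (Phi1 act ρ)
      (TensorProduct.map (Km act ρ y) (act.flip z)) (Coalgebra.comul (R := k)))
    (Coalgebra.comul h)
  simp only [comp_apply] at a1
  have a2 : (TensorProduct.map (Km act ρ y) (act.flip z)) ∘ₗ (Coalgebra.comul (R := k))
      = ((TensorProduct.map (KB act ρ y) (act.flip z))
          ∘ₗ (TensorProduct.assoc k H H H).symm.toLinearMap)
        ∘ₗ ((lTensor H (Coalgebra.comul (R := k))) ∘ₗ Coalgebra.comul) := by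
    rw [INLB act ρ y z]
    rfl
  have a3 := LinearMap.congr_fun (map_comp_lTensor _ (Phi1 act ρ)
      ((TensorProduct.map (KB act ρ y) (act.flip z))
          ∘ₗ (TensorProduct.assoc k H H H).symm.toLinearMap)
      ((lTensor H (Coalgebra.comul (R := k))) ∘ₗ Coalgebra.comul))
    (Coalgebra.comul h)
  simp only [comp_apply, lTensor_comp] at a3
  rw [← a1.symm, a2, ← a3]

theorem bodyE :
    pOne ∘ₗ (TensorProduct.map (Phi1 act ρ) (KB act ρ 1))
        ∘ₗ (TensorProduct.assoc k H H H).toLinearMap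
      = pThree ∘ₗ (rTensor L pOne)
          ∘ₗ (TensorProduct.map (TensorProduct.map (Phi1 act ρ) ρ) (act.flip 1)) := by
  ext h1 h2 h3
  simp only [TensorProduct.AlgebraTensorModule.curry_apply, TensorProduct.curry_apply,
    LinearMap.coe_restrictScalars, compr₂_apply, TensorProduct.mk_apply, comp_apply,
    LinearEquiv.coe_coe, assoc_tmul, map_tmul, rTensor_tmul, KB, Phi1, mul'_apply,
    flip_apply]
  generalize ρ h1 = w1
  generalize ρ h2 = w2
  induction w1 using TensorProduct.induction_on with
  | zero => simp
  | tmul a1 l1 =>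
      induction w2 using TensorProduct.induction_on with
      | zero => simp
      | tmul a2 l2 => simp [mul_assoc]
      | add u v hu hv =>
          simp only [rTensor_tmul, flip_apply] at hu hv
          simp [add_tmul, tmul_add, hu, hv]
  | add u v hu hv =>
      simp [add_tmul, tmul_add, hu, hv]

theorem claimE : pOne ∘ₗ (TensorProduct.map (Phi1 act ρ) (Km act ρ 1)) ∘ₗ Coalgebra.comul
    = CoreR act ρ := by
  apply LinearMap.ext; intro h
  simp only [comp_apply, CoreR, delta3]
  have b1 := LinearMap.congr_fun (map_comp_lTensor _ (Phi1 act ρ)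
      (KB act ρ 1) (Coalgebra.comul (R := k))) (Coalgebra.comul h)
  simp only [comp_apply] at b1
  rw [show Km act ρ (1 : L) = KB act ρ 1 ∘ₗ Coalgebra.comul from rfl, ← b1]
  rw [← Coalgebra.coassoc_apply]
  have b2 := LinearMap.congr_fun (bodyE act ρ)
    ((rTensor H (Coalgebra.comul (R := k))) (Coalgebra.comul h))
  simp only [comp_apply, LinearEquiv.coe_coe] at b2
  rw [b2]

theorem coreLR (hpmp : IsPartialMatchedPair k H L act ρ)
    (hqa : IsQuasiAbelian k H L act ρ) : CoreL act ρ = CoreR act ρ := by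
  rw [step0 act ρ, compat_map act ρ hpmp 1, step2 act ρ hpmp, L10 act ρ hpmp hqa,
    claimC act ρ, qa_eq act ρ hqa 1, ← claimD act ρ hpmp 1 1, one_mul, claimE act ρ]

/-- `(x₁ ⊗ x₂) ⊗ ((v ⊗ a) ⊗ w) ↦ ((x₁v) ⊗ a) ⊗ (x₂w)`. -/
noncomputable def PhiM : (L ⊗[k] L) ⊗[k] ((L ⊗[k] H) ⊗[k] L) →ₗ[k] (L ⊗[k] H) ⊗[k] L :=
  (TensorProduct.map
      ((rTensor H (mul' k L)) ∘ₗ (TensorProduct.assoc k L L H).symm.toLinearMap)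
      (mul' k L))
    ∘ₗ (TensorProduct.tensorTensorTensorComm k L L (L ⊗[k] H) L).toLinearMap

@[simp] theorem PhiM_tmul (x1 x2 v : L) (a : H) (w : L) :
    (PhiM : (L ⊗[k] L) ⊗[k] ((L ⊗[k] H) ⊗[k] L) →ₗ[k] (L ⊗[k] H) ⊗[k] L)
        ((x1 ⊗ₜ x2) ⊗ₜ ((v ⊗ₜ a) ⊗ₜ w)) = ((x1 * v) ⊗ₜ a) ⊗ₜ (x2 * w) := by
  simp [PhiM]

noncomputable def MxM (x : L) : (L ⊗[k] H) ⊗[k] L →ₗ[k] (L ⊗[k] H) ⊗[k] L :=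
  PhiM ∘ₗ (TensorProduct.mk k (L ⊗[k] L) ((L ⊗[k] H) ⊗[k] L)) (Coalgebra.comul (R := k) x)

theorem FLmap (w : L ⊗[k] L) :
    pOne ∘ₗ (TensorProduct.map (mulLeft k w) (LinearMap.id : H ⊗[k] L →ₗ[k] H ⊗[k] L))
      = PhiM ∘ₗ ((TensorProduct.mk k (L ⊗[k] L) ((L ⊗[k] H) ⊗[k] L)) w) ∘ₗ pOne := by
  ext v1 v2 a y
  simp only [TensorProduct.AlgebraTensorModule.curry_apply, TensorProduct.curry_apply,
    LinearMap.coe_restrictScalars, compr₂_apply, TensorProduct.mk_apply, comp_apply,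
    map_tmul, LinearMap.id_coe, id_eq, pOne_tmul, mulLeft_apply]
  induction w using TensorProduct.induction_on with
  | zero => simp
  | tmul x1 x2 => simp [Algebra.TensorProduct.tmul_mul_tmul, mul_assoc]
  | add u v hu hv => simp [add_mul, add_tmul, hu, hv]

theorem FRmap (w : L ⊗[k] L) :
    pThree ∘ₗ (rTensor L pOne)
        ∘ₗ (TensorProduct.map
            (TensorProduct.map (mulLeft k w) (LinearMap.id : H ⊗[k] L →ₗ[k] H ⊗[k] L))
            (LinearMap.id : L →ₗ[k] L))
      = PhiM ∘ₗ ((TensorProduct.mk k (L ⊗[k] L) ((L ⊗[k] H) ⊗[k] L)) w)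
          ∘ₗ pThree ∘ₗ (rTensor L pOne) := by
  ext v1 v2 a y c
  simp only [TensorProduct.AlgebraTensorModule.curry_apply, TensorProduct.curry_apply,
    LinearMap.coe_restrictScalars, compr₂_apply, TensorProduct.mk_apply, comp_apply,
    map_tmul, LinearMap.id_coe, id_eq, pOne_tmul, rTensor_tmul, pThree_tmul,
    mulLeft_apply]
  induction w using TensorProduct.induction_on with
  | zero => simp
  | tmul x1 x2 => simp [Algebra.TensorProduct.tmul_mul_tmul, mul_assoc]
  | add u v hu hv => simp [add_mul, add_tmul, hu, hv]

theorem factorL (x : L) :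
    pOne ∘ₗ (TensorProduct.map (dOne act x) ρ) ∘ₗ Coalgebra.comul
      = MxM x ∘ₗ CoreL act ρ := by
  have e0 : TensorProduct.map (dOne act x) ρ
      = (TensorProduct.map (mulLeft k (Coalgebra.comul (R := k) x))
            (LinearMap.id : H ⊗[k] L →ₗ[k] H ⊗[k] L))
        ∘ₗ (TensorProduct.map ((Coalgebra.comul (R := k)) ∘ₗ act.flip 1) ρ) := by
    rw [← map_comp, id_comp]
    rfl
  apply LinearMap.ext; intro h
  simp only [comp_apply]
  have e1 := LinearMap.congr_fun e0 (Coalgebra.comul h)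
  simp only [comp_apply] at e1
  rw [e1]
  have e2 := LinearMap.congr_fun (FLmap (Coalgebra.comul (R := k) x))
    ((TensorProduct.map ((Coalgebra.comul (R := k)) ∘ₗ act.flip 1) ρ) (Coalgebra.comul h))
  simp only [comp_apply] at e2
  rw [e2]
  simp only [MxM, CoreL, comp_apply, TensorProduct.mk_apply]

theorem factorR (x : L) :
    (pThree ∘ₗ rTensor L pOne)
        ∘ₗ (TensorProduct.map (TensorProduct.map (eOne act ρ x) ρ) (act.flip 1))
        ∘ₗ delta3
      = MxM x ∘ₗ CoreR act ρ := by
  have e0 : TensorProduct.map (TensorProduct.map (eOne act ρ x) ρ) (act.flip 1)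
      = (TensorProduct.map
            (TensorProduct.map (mulLeft k (Coalgebra.comul (R := k) x))
              (LinearMap.id : H ⊗[k] L →ₗ[k] H ⊗[k] L))
            (LinearMap.id : L →ₗ[k] L))
        ∘ₗ (TensorProduct.map (TensorProduct.map (Phi1 act ρ) ρ) (act.flip 1)) := by
    rw [← map_comp, ← map_comp, id_comp, id_comp]
    rfl
  apply LinearMap.ext; intro h
  simp only [comp_apply]
  have e1 := LinearMap.congr_fun e0 (delta3 h)
  simp only [comp_apply] at e1
  rw [e1]
  have e2 := LinearMap.congr_fun (FRmap (Coalgebra.comul (R := k) x))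
    ((TensorProduct.map (TensorProduct.map (Phi1 act ρ) ρ) (act.flip 1)) (delta3 h))
  simp only [comp_apply] at e2
  rw [e2]
  simp only [MxM, CoreR, comp_apply, TensorProduct.mk_apply]

end Aux
/-- Lemma 3.8(ii): for a quasi-abelian partial matched pair `(H, L)`,
`Σ x₁(h₁ ⇀ 1_L)₁ ⊗ h₂⁰ ⊗ x₂(h₁ ⇀ 1_L)₂h₂¹ ⊗ h₃
  = Σ x₁(h₁⁰ ⇀ 1_L) ⊗ h₂⁰ ⊗ x₂h₁¹h₂¹(h₃ ⇀ 1_L) ⊗ h₄`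
in `L ⊗ H ⊗ L ⊗ H`, for all `h ∈ H` and `x ∈ L`. -/
theorem sweedler_four_identity
    (act : H →ₗ[k] L →ₗ[k] L) (ρ : H →ₗ[k] H ⊗[k] L)
    (hpmp : IsPartialMatchedPair k H L act ρ)
    (hqa : IsQuasiAbelian k H L act ρ) :
    ∀ (h : H) (x : L),
      (pTwo ((LinearMap.rTensor H pOne)
          ((TensorProduct.map (TensorProduct.map (dOne act x) ρ) LinearMap.id)
            (delta3 h))))
        = pTwo ((LinearMap.rTensor H (pThree ∘ₗ LinearMap.rTensor L pOne))
            ((TensorProduct.map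
                (TensorProduct.map (TensorProduct.map (eOne act ρ x) ρ) (act.flip 1))
                LinearMap.id)
              (delta4 h))) := by
  intro h x
  have cast1 : (TensorProduct.map (TensorProduct.map (dOne act x) ρ)
      (LinearMap.id : H →ₗ[k] H)) = rTensor H (TensorProduct.map (dOne act x) ρ) := rfl
  have cast2 : (TensorProduct.map
      (TensorProduct.map (TensorProduct.map (eOne act ρ x) ρ) (act.flip 1))
      (LinearMap.id : H →ₗ[k] H))
      = rTensor H (TensorProduct.map (TensorProduct.map (eOne act ρ x) ρ) (act.flip 1)) := rfl
  rw [cast1, cast2]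
  have lhs_eq : (rTensor H pOne)
      ((rTensor H (TensorProduct.map (dOne act x) ρ)) (delta3 h))
      = (rTensor H (pOne ∘ₗ (TensorProduct.map (dOne act x) ρ) ∘ₗ Coalgebra.comul))
          (Coalgebra.comul h) := by
    simp only [rTensor_comp, delta3, comp_apply]
  have rhs_eq : (rTensor H (pThree ∘ₗ rTensor L pOne))
      ((rTensor H (TensorProduct.map
          (TensorProduct.map (eOne act ρ x) ρ) (act.flip 1))) (delta4 h))
      = (rTensor H ((pThree ∘ₗ rTensor L pOne)
          ∘ₗ (TensorProduct.map (TensorProduct.map (eOne act ρ x) ρ) (act.flip 1))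
          ∘ₗ delta3)) (Coalgebra.comul h) := by
    simp only [rTensor_comp, delta4, comp_apply]
  have key : pOne ∘ₗ (TensorProduct.map (dOne act x) ρ) ∘ₗ Coalgebra.comul
      = (pThree ∘ₗ rTensor L pOne)
          ∘ₗ (TensorProduct.map (TensorProduct.map (eOne act ρ x) ρ) (act.flip 1))
          ∘ₗ delta3 := by
    rw [factorL act ρ x, factorR act ρ x, coreLR act ρ hpmp hqa]
  rw [lhs_eq, rhs_eq, key]

end Lemma8ii

end PartialHopf
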